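/- For every constant C₀ > 0 there exist η > 0 and a twice continuously differentiable compactly supported function f : [0,∞) → [0,1] with f(0) = 1 and f'(0) = 0, such that for every λ ≥ 1: ∫₀^∞ e^{−2t} ( C₀ f''(t)² + 2 f'(t)² + λ f(t)² ) dt ≤ (1 − η) · λ/2. (Note that λ/2 = ∫₀^∞ e^{−2t} λ dt is the value of the left-hand integral for the constant function f ≡ 1.) -/

import Mathlib

open MeasureTheory Real Set Filter Topology

noncomputable section

abbrev Pt : Type := EuclideanSpace ℝ (Fin 2)

/-- The open disk of radius `r` centered at `p`. -/
def disk (p : Pt) (r : ℝ) : Set Pt := Metric.ball p r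

/-- Partial derivative in the `i`-th coordinate direction. -/
def pd (i : Fin 2) (u : Pt → ℝ) (x : Pt) : ℝ :=
  deriv (fun s : ℝ => u (x + s • EuclideanSpace.single i (1:ℝ))) 0

/-- Laplacian. -/
def lap (u : Pt → ℝ) (x : Pt) : ℝ := ∑ i : Fin 2, pd i (pd i u) x

/-- Pointwise norm of the Hessian. -/
def hessNorm (u : Pt → ℝ) (x : Pt) : ℝ := ‖iteratedFDeriv ℝ 2 u x‖

/-- Membership in `H²(D)`: `u`, its gradient and its Hessian are square integrable on `D`. -/
def MemH2 (u : Pt → ℝ) (D : Set Pt) : Prop :=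
  MeasureTheory.MemLp u 2 (volume.restrict D) ∧
  MeasureTheory.MemLp (fun x => ‖gradient u x‖) 2 (volume.restrict D) ∧
  MeasureTheory.MemLp (hessNorm u) 2 (volume.restrict D)

/-- The energy `E_lam(u;D) = ∫_D |Δu|² + lam·|{u ≠ 0} ∩ D|`. -/
def energyL (lam : ℝ) (u : Pt → ℝ) (D : Set Pt) : ℝ :=
  (∫ x in D, (lap u x) ^ 2) + lam * (volume (D ∩ {x | u x ≠ 0})).toReal

def energy (u : Pt → ℝ) (D : Set Pt) : ℝ := energyL 1 u D

/-- `S` is compactly contained in `D`. -/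
def CpctIn (S D : Set Pt) : Prop := IsCompact (closure S) ∧ closure S ⊆ D

/-- `u ∈ M_lam(D)`. -/
def MinimizerL (lam : ℝ) (u : Pt → ℝ) (D : Set Pt) : Prop :=
  MemH2 u D ∧ ∀ v : Pt → ℝ, MemH2 v D → CpctIn {x | u x ≠ v x} D →
    energyL lam u D ≤ energyL lam v D

/-- `u ∈ M(D)`. -/
def Minimizer (u : Pt → ℝ) (D : Set Pt) : Prop := MinimizerL 1 u D

def H1norm (u : Pt → ℝ) (D : Set Pt) : ℝ :=
  Real.sqrt (∫ x in D, ((u x) ^ 2 + ‖gradient u x‖ ^ 2))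

def H2norm (u : Pt → ℝ) (D : Set Pt) : ℝ :=
  Real.sqrt (∫ x in D, ((u x) ^ 2 + ‖gradient u x‖ ^ 2 + (hessNorm u x) ^ 2))

/-- Open support of a `C¹` function. -/
def Spt (u : Pt → ℝ) : Set Pt := {x | u x ≠ 0} ∪ {x | gradient u x ≠ 0}

/-- Rescaling `u_{p,r}(z) = u(p + rz)/r²`. -/
def resc (u : Pt → ℝ) (p : Pt) (r : ℝ) : Pt → ℝ := fun z => u (p + r • z) / r ^ 2

/-- The point with polar coordinates `(r, θ)`. -/
def polar (r θ : ℝ) : Pt := WithLp.toLp 2 ![r * Real.cos θ, r * Real.sin θ]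

def Ufun (u : Pt → ℝ) (r θ : ℝ) : ℝ := u (polar r θ)

/-- `N(u,r) = ∫_{S¹} ( r² |d(u_r)/dr|² + |∂_θ u_r|² + u_r² )`. -/
def Nfun (u : Pt → ℝ) (r : ℝ) : ℝ :=
  ∫ θ in (0:ℝ)..(2 * π),
    (r ^ 2 * (deriv (fun s => Ufun u s θ / s ^ 2) r) ^ 2
      + (deriv (fun t => Ufun u r t) θ / r ^ 2) ^ 2
      + (Ufun u r θ / r ^ 2) ^ 2)

/-- `R(u,r) = 2∫_{S¹} ((∂_θ u_r)² − (∂_r u_r)² + 2u_r² − u_r ∂_r u_r)`. -/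
def Rfun (u : Pt → ℝ) (r : ℝ) : ℝ :=
  2 * ∫ θ in (0:ℝ)..(2 * π),
    ((deriv (fun t => Ufun u r t) θ / r ^ 2) ^ 2
      - (deriv (fun s => Ufun u s θ) r / r) ^ 2
      + 2 * (Ufun u r θ / r ^ 2) ^ 2
      - (Ufun u r θ / r ^ 2) * (deriv (fun s => Ufun u s θ) r / r))

/-- The Weiss-type energy `W(u,r) = r⁻²E(u;𝔻_r) + rN'(u,r) + R(u,r)`. -/
def W (u : Pt → ℝ) (r : ℝ) : ℝ :=
  energy u (disk 0 r) / r ^ 2 + r * deriv (Nfun u) r + Rfun u r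

/-- `W(u,0) ≥ c`: the limit of `W(u,r)` as `r → 0⁺` exists (in `ℝ`) and is `≥ c`. -/
def WZeroGe (u : Pt → ℝ) (c : ℝ) : Prop :=
  ∃ w : ℝ, Filter.Tendsto (fun r => W u r) (nhdsWithin 0 (Set.Ioi 0)) (nhds w) ∧ c ≤ w

/-- `t₁`, the unique fixed point of `tan` in `(π, 2π)`. -/
def t1 : ℝ := sInf {t : ℝ | π < t ∧ t < 2 * π ∧ Real.tan t = t}

def uI : Pt → ℝ := fun p => (max (p 1) 0) ^ 2 / 2

def uIII : Pt → ℝ := fun p => (p 1) ^ 2 / 2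

def uabc (a b c : ℝ) : Pt → ℝ := fun p =>
  a * ((p 0) ^ 2 + (p 1) ^ 2) + b * ((p 0) ^ 2 - (p 1) ^ 2) + 2 * c * (p 0) * (p 1)

/-- The angle of a point, measured in `[0, 2π)`. -/
def angleOf (p : Pt) : ℝ :=
  if Complex.arg ⟨p 0, p 1⟩ < 0 then Complex.arg ⟨p 0, p 1⟩ + 2 * π else Complex.arg ⟨p 0, p 1⟩

def bII (θ : ℝ) : ℝ :=
  if 0 ≤ θ ∧ θ ≤ t1 then
    (1 - Real.cos (2 * θ) - (2 / t1) * (θ - Real.sin (2 * θ) / 2)) / 4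
  else 0

def uII : Pt → ℝ := fun p => ‖p‖ ^ 2 * bII (angleOf p)

/-- Rotation of the plane by angle `φ`. -/
def rotPt (φ : ℝ) (p : Pt) : Pt :=
  WithLp.toLp 2 ![Real.cos φ * p 0 - Real.sin φ * p 1, Real.sin φ * p 0 + Real.cos φ * p 1]

def IsTypeI (v : Pt → ℝ) : Prop :=
  ∃ s φ : ℝ, (s = 1 ∨ s = -1) ∧ v = fun p => s * uI (rotPt φ p)
def IsTypeII (v : Pt → ℝ) : Prop :=
  ∃ s φ : ℝ, (s = 1 ∨ s = -1) ∧ v = fun p => s * uII (rotPt φ p)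
def IsTypeIII (v : Pt → ℝ) : Prop :=
  ∃ lam φ : ℝ, 1 ≤ |lam| ∧ v = fun p => lam * uIII (rotPt φ p)
def IsTypeIV (v : Pt → ℝ) : Prop :=
  ∃ a b c : ℝ, a ^ 2 ≠ b ^ 2 + c ^ 2 ∧ v = uabc a b c

/-- Global 2-homogeneity. -/
def Homog2 (v : Pt → ℝ) : Prop := ∀ t : ℝ, 0 < t → ∀ z : Pt, v (t • z) = t ^ 2 * v z

/-- `M_hom`: nonzero 2-homogeneous minimizers. -/
def MemMhom (v : Pt → ℝ) : Prop := Minimizer v (disk 0 1) ∧ Homog2 v ∧ v ≠ 0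

/-- `M_hom^Θ`. -/
def MemMhomTheta (Θ : ℝ) (v : Pt → ℝ) : Prop :=
  MemMhom v ∧ 2 * (volume (Spt v ∩ disk 0 1)).toReal = Θ

namespace S18

def vf (L : ℝ) (s : ℝ) : ℝ :=
  if |s| ≤ L then
    24 / (Real.exp (2*L) * (Real.exp (2*L) + 2)) *
      (Real.exp (2*|s|) * ((Real.exp (2*|s|) - Real.exp (2*L)) *
        (Real.exp (2*|s|) - (Real.exp (2*L) + 2)/3)))
  else 0

def wf (L : ℝ) (s : ℝ) : ℝ := ∫ x in (0:ℝ)..s, vf L x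

def Gf (L : ℝ) (t : ℝ) : ℝ := ∫ x in (0:ℝ)..t, wf L x

def ff (L : ℝ) (t : ℝ) : ℝ := 1 - Gf L t / Gf L L

lemma vf_even (L s : ℝ) : vf L (-s) = vf L s := by simp [vf, abs_neg]

lemma vf_cont (L : ℝ) : Continuous (vf L) := by
  unfold vf
  apply Continuous.if_le
  · fun_prop
  · exact continuous_const
  · exact continuous_abs
  · exact continuous_const
  · intro x hx
    rw [hx]
    simp [sub_self]

lemma vf_eq_zero (L : ℝ) {s : ℝ} (h : L ≤ |s|) : vf L s = 0 := by
  unfold vf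
  split
  · next h2 =>
      have : |s| = L := le_antisymm h2 h
      rw [this]
      ring
  · rfl

lemma wf_hasDeriv (L s : ℝ) : HasDerivAt (wf L) (vf L s) s :=
  ((vf_cont L).integral_hasStrictDerivAt 0 s).hasDerivAt

lemma wf_cont (L : ℝ) : Continuous (wf L) := by
  have : Differentiable ℝ (wf L) := fun s => (wf_hasDeriv L s).differentiableAt
  exact this.continuous

lemma wf_zero (L : ℝ) : wf L 0 = 0 := by simp [wf]

lemma wf_eq (L : ℝ) {s : ℝ} (hs0 : 0 ≤ s) (hsL : s ≤ L) :
    wf L s = 4 / (Real.exp (2*L) * (Real.exp (2*L) + 2)) *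
      ((Real.exp (2*s) - 1) * (Real.exp (2*L) - Real.exp (2*s))^2) := by
  set E := Real.exp (2*L) with hE
  have hEpos : 0 < E := Real.exp_pos _
  set c : ℝ := 4 / (E * (E + 2)) with hc
  set F : ℝ → ℝ := fun x => c * ((Real.exp (2*x) - 1) * (E - Real.exp (2*x))^2) with hF
  have key : ∀ x ∈ Set.uIcc (0:ℝ) s, HasDerivAt F (vf L x) x := by
    intro x hx
    rw [Set.uIcc_of_le hs0] at hx
    have hx0 : 0 ≤ x := hx.1
    have hxL : x ≤ L := hx.2.trans hsL
    have hq : HasDerivAt (fun y : ℝ => Real.exp (2*y)) (Real.exp (2*x) * 2) x := by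
      have h1 : HasDerivAt (fun y : ℝ => 2*y) 2 x := by
        simpa using (hasDerivAt_id x).const_mul 2
      exact h1.exp
    have h2 : HasDerivAt F (c * ((Real.exp (2*x) * 2) * (E - Real.exp (2*x))^2 +
        (Real.exp (2*x) - 1) * (2 * (E - Real.exp (2*x))^1 * (-(Real.exp (2*x) * 2))))) x := by
      exact (((hq.sub_const 1).mul ((hq.const_sub E).pow 2))).const_mul c
    convert h2 using 1
    have habs : |x| = x := abs_of_nonneg hx0
    have hif : |x| ≤ L := by rw [habs]; exact hxL
    unfold vf
    rw [if_pos hif, habs]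
    rw [hc]
    have hne : E * (E + 2) ≠ 0 := by positivity
    field_simp
    ring
  have hint : IntervalIntegrable (vf L) volume 0 s := (vf_cont L).intervalIntegrable _ _
  have := intervalIntegral.integral_eq_sub_of_hasDerivAt key hint
  unfold wf
  rw [this]
  simp [hF]

lemma exp_two_ge_seven : (7:ℝ) ≤ Real.exp 2 := by
  have h := Real.exp_one_gt_d9.le
  have : Real.exp 2 = Real.exp 1 * Real.exp 1 := by
    rw [← Real.exp_add]; norm_num
  nlinarith [Real.exp_pos 1]

lemma E_ge_two {L : ℝ} (hL : 4 ≤ L) : (2:ℝ) ≤ Real.exp (2*L) := by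
  have : (2:ℝ) ≤ 1 + 2*L := by linarith
  exact this.trans ((Real.add_one_le_exp (2*L)).trans_eq' (by ring))

lemma wf_eq_zero (L : ℝ) {s : ℝ} (hL : 0 ≤ L) (hs : L ≤ s) : wf L s = 0 := by
  have h1 : wf L L = 0 := by
    rw [wf_eq L hL le_rfl]; ring
  have h2 : (∫ x in L..s, vf L x) = 0 := by
    rw [intervalIntegral.integral_congr (g := fun _ => (0:ℝ))]
    · simp
    · intro x hx
      rw [Set.uIcc_of_le hs] at hx
      exact vf_eq_zero L (le_trans hx.1 (le_abs_self x))
  have h3 : wf L L + (∫ x in L..s, vf L x) = wf L s :=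
    intervalIntegral.integral_add_adjacent_intervals
      ((vf_cont L).intervalIntegrable _ _) ((vf_cont L).intervalIntegrable _ _)
  rw [← h3, h1, h2]; ring

lemma wf_neg (L s : ℝ) : wf L (-s) = - wf L s := by
  have h1 : (∫ x in (0:ℝ)..s, vf L (-x)) = ∫ x in (-s)..(-(0:ℝ)), vf L x :=
    intervalIntegral.integral_comp_neg (fun x => vf L x)
  have h2 : (∫ x in (0:ℝ)..s, vf L (-x)) = wf L s := by
    unfold wf; congr 1; funext x; exact vf_even L x
  have h3 : (∫ x in (0:ℝ)..(-s), vf L x) = - ∫ x in (-s)..(0:ℝ), vf L x := by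
    rw [intervalIntegral.integral_symm]
  show (∫ x in (0:ℝ)..(-s), vf L x) = - wf L s
  rw [h3]
  congr 1
  rw [← h2, h1]
  norm_num

lemma wf_nonneg (L : ℝ) {s : ℝ} (hs : 0 ≤ s) (hL : 0 ≤ L) : 0 ≤ wf L s := by
  rcases le_or_gt s L with h | h
  · rw [wf_eq L hs h]
    have h1 : (1:ℝ) ≤ Real.exp (2*s) := by
      rw [← Real.exp_zero]; exact Real.exp_le_exp.mpr (by linarith)
    have hE := Real.exp_pos (2*L)
    have h2 : (0:ℝ) ≤ 4 / (Real.exp (2*L) * (Real.exp (2*L)+2)) := by positivity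
    exact mul_nonneg h2 (mul_nonneg (by linarith) (sq_nonneg _))
  · rw [wf_eq_zero L hL h.le]

lemma wf_le (L : ℝ) {s : ℝ} (hs : 0 ≤ s) (hL : 0 ≤ L) : wf L s ≤ 4 * Real.exp (2*s) := by
  rcases le_or_gt s L with h | h
  · rw [wf_eq L hs h]
    set E := Real.exp (2*L)
    set q := Real.exp (2*s)
    have hEpos : (0:ℝ) < E := Real.exp_pos _
    have hq1 : (1:ℝ) ≤ q := by
      rw [show (1:ℝ) = Real.exp 0 by simp]; exact Real.exp_le_exp.mpr (by linarith)
    have hqE : q ≤ E := Real.exp_le_exp.mpr (by linarith)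
    rw [div_mul_eq_mul_div, div_le_iff₀ (by positivity)]
    nlinarith [sq_nonneg (E - q), sq_nonneg q, mul_pos hEpos (Real.exp_pos (2*s))]
  · rw [wf_eq_zero L hL h.le]; positivity

lemma vf_abs_le (L : ℝ) {s : ℝ} (hs : 0 ≤ s) (hL : 0 ≤ L) :
    |vf L s| ≤ 24 * Real.exp (2*s) := by
  rcases le_or_gt s L with h | h
  · have habs : |s| = s := abs_of_nonneg hs
    unfold vf
    rw [if_pos (by rw [habs]; exact h), habs]
    set E := Real.exp (2*L)
    set q := Real.exp (2*s)
    have hEpos : (0:ℝ) < E := Real.exp_pos _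
    have hqpos : (0:ℝ) < q := Real.exp_pos _
    have hq1 : (1:ℝ) ≤ q := by
      rw [show (1:ℝ) = Real.exp 0 by simp]; exact Real.exp_le_exp.mpr (by linarith)
    have hqE : q ≤ E := Real.exp_le_exp.mpr (by linarith)
    have hE1 : (1:ℝ) ≤ E := hq1.trans hqE
    have b1 : |q - E| ≤ E := by
      rw [abs_le]; constructor <;> nlinarith
    have b2 : |q - (E+2)/3| ≤ E := by
      rw [abs_le]; constructor <;> nlinarith
    calc |24 / (E * (E + 2)) * (q * ((q - E) * (q - (E+2)/3)))|
        = 24 / (E * (E + 2)) * q * (|q - E| * |q - (E+2)/3|) := by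
          rw [abs_mul, abs_mul, abs_mul, abs_of_nonneg (by positivity : (0:ℝ) ≤ 24 / (E * (E+2))),
            abs_of_nonneg hqpos.le]; ring
      _ ≤ 24 / (E * (E + 2)) * q * (E * E) := by
          apply mul_le_mul_of_nonneg_left _ (by positivity)
          exact mul_le_mul b1 b2 (abs_nonneg _) hEpos.le
      _ ≤ 24 * q := by
          rw [div_mul_eq_mul_div, div_mul_eq_mul_div, div_le_iff₀ (by positivity)]
          nlinarith
  · rw [vf_eq_zero L (by rw [abs_of_nonneg hs]; exact h.le)]
    simp
    positivity

lemma wf_ge (L : ℝ) {s : ℝ} (hL : 4 ≤ L) (hs0 : 0 ≤ s) (hs1 : s ≤ L - 1) :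
    Real.exp (2*s) - 1 ≤ wf L s := by
  have hsL : s ≤ L := by linarith
  rw [wf_eq L hs0 hsL]
  set E := Real.exp (2*L)
  set q := Real.exp (2*s)
  have hEpos : (0:ℝ) < E := Real.exp_pos _
  have hq1 : (1:ℝ) ≤ q := by
    rw [show (1:ℝ) = Real.exp 0 by simp]; exact Real.exp_le_exp.mpr (by linarith)
  have hE2 : (2:ℝ) ≤ E := E_ge_two hL
  have hq7 : 7 * q ≤ E := by
    have h1 : Real.exp (2*s) * Real.exp 2 ≤ Real.exp (2*L) := by
      rw [← Real.exp_add]; exact Real.exp_le_exp.mpr (by linarith)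
    nlinarith [exp_two_ge_seven, Real.exp_pos (2*s)]
  have key : (1:ℝ) ≤ 4 / (E * (E + 2)) * (E - q)^2 := by
    have h8 : 6*E ≤ 7*(E-q) := by linarith
    have h9 : (6*E)*(6*E) ≤ (7*(E-q))*(7*(E-q)) :=
      mul_le_mul h8 h8 (by nlinarith) (by nlinarith)
    rw [div_mul_eq_mul_div, le_div_iff₀ (by positivity)]
    nlinarith
  calc q - 1 = 1 * (q - 1) := by ring
    _ ≤ (4 / (E * (E + 2)) * (E - q)^2) * (q - 1) := by
        apply mul_le_mul_of_nonneg_right key (by linarith)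
    _ = 4 / (E * (E + 2)) * ((q - 1) * (E - q)^2) := by ring

lemma integral_exp2 (a b : ℝ) :
    (∫ x in a..b, Real.exp (2*x)) = Real.exp (2*b)/2 - Real.exp (2*a)/2 := by
  have key : ∀ x ∈ Set.uIcc a b, HasDerivAt (fun y => Real.exp (2*y)/2) (Real.exp (2*x)) x := by
    intro x _
    have h1 : HasDerivAt (fun y : ℝ => 2*y) 2 x := by simpa using (hasDerivAt_id x).const_mul 2
    have := h1.exp.div_const 2
    exact this.congr_deriv (by ring)
  have := intervalIntegral.integral_eq_sub_of_hasDerivAt key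
    ((by fun_prop : Continuous fun x => Real.exp (2*x)).intervalIntegrable _ _)
  simpa using this

lemma integral_expm2 (a b : ℝ) :
    (∫ x in a..b, Real.exp (-2*x)) = Real.exp (-2*a)/2 - Real.exp (-2*b)/2 := by
  have key : ∀ x ∈ Set.uIcc a b, HasDerivAt (fun y => -Real.exp (-2*y)/2) (Real.exp (-2*x)) x := by
    intro x _
    have h1 : HasDerivAt (fun y : ℝ => -2*y) (-2) x := by simpa using (hasDerivAt_id x).const_mul (-2)
    have := (h1.exp.div_const 2).neg
    have e : (fun y => -Real.exp (-2*y)/2) = -fun x => Real.exp (-2 * x) / 2 := by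
      funext y; simp only [Pi.neg_apply]; ring
    rw [e]
    exact this.congr_deriv (by ring)
  have := intervalIntegral.integral_eq_sub_of_hasDerivAt key
    ((by fun_prop : Continuous fun x => Real.exp (-2*x)).intervalIntegrable _ _)
  rw [this]
  ring

lemma Gf_hasDeriv (L t : ℝ) : HasDerivAt (Gf L) (wf L t) t :=
  ((wf_cont L).integral_hasStrictDerivAt 0 t).hasDerivAt

lemma Gf_cont (L : ℝ) : Continuous (Gf L) := by
  have h : Differentiable ℝ (Gf L) := fun t => (Gf_hasDeriv L t).differentiableAt
  exact h.continuous

lemma Gf_zero (L : ℝ) : Gf L 0 = 0 := by simp [Gf]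

lemma Gf_nonneg (L : ℝ) {t : ℝ} (hL : 4 ≤ L) (ht : 0 ≤ t) : 0 ≤ Gf L t :=
  intervalIntegral.integral_nonneg ht (fun x hx => wf_nonneg L hx.1 (by linarith))

lemma Gf_add (L a b : ℝ) : Gf L a + (∫ x in a..b, wf L x) = Gf L b :=
  intervalIntegral.integral_add_adjacent_intervals
    ((wf_cont L).intervalIntegrable _ _) ((wf_cont L).intervalIntegrable _ _)

lemma Gf_eq_GL_of_ge (L : ℝ) {t : ℝ} (hL : 4 ≤ L) (ht : L ≤ t) : Gf L t = Gf L L := by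
  have h2 : (∫ x in L..t, wf L x) = 0 := by
    rw [intervalIntegral.integral_congr (g := fun _ => (0:ℝ))]
    · simp
    · intro x hx
      rw [Set.uIcc_of_le ht] at hx
      exact wf_eq_zero L (by linarith) hx.1
  rw [← Gf_add L L t, h2, add_zero]

lemma Gf_le_GL (L : ℝ) {t : ℝ} (hL : 4 ≤ L) (ht : 0 ≤ t) : Gf L t ≤ Gf L L := by
  rcases le_or_gt t L with h | h
  · have h2 : 0 ≤ ∫ x in t..L, wf L x :=
      intervalIntegral.integral_nonneg h (fun x hx => wf_nonneg L (ht.trans hx.1) (by linarith))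
    have := Gf_add L t L
    linarith
  · rw [Gf_eq_GL_of_ge L hL h.le]

lemma Gf_even (L t : ℝ) : Gf L (-t) = Gf L t := by
  have h1 : (∫ x in (0:ℝ)..t, wf L (-x)) = ∫ x in (-t)..(-(0:ℝ)), wf L x :=
    intervalIntegral.integral_comp_neg (fun x => wf L x)
  have h2 : (∫ x in (0:ℝ)..t, wf L (-x)) = - Gf L t := by
    rw [show (∫ x in (0:ℝ)..t, wf L (-x)) = ∫ x in (0:ℝ)..t, -(wf L x) from
      intervalIntegral.integral_congr (fun x _ => wf_neg L x)]
    rw [intervalIntegral.integral_neg]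
    rfl
  have h3 : (∫ x in (0:ℝ)..(-t), wf L x) = - ∫ x in (-t)..(0:ℝ), wf L x := by
    rw [intervalIntegral.integral_symm]
  show (∫ x in (0:ℝ)..(-t), wf L x) = Gf L t
  rw [h3]
  rw [show (∫ x in (-t)..(0:ℝ), wf L x) = ∫ x in (-t)..(-(0:ℝ)), wf L x by norm_num]
  rw [← h1, h2]
  ring

lemma exp_sq_lb (y : ℝ) (hy : 0 ≤ y) : (1+y)*(1+y) ≤ Real.exp (2*y) := by
  have h1 : 1 + y ≤ Real.exp y := by linarith [Real.add_one_le_exp y]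
  have h2 : Real.exp (2*y) = Real.exp y * Real.exp y := by
    rw [← Real.exp_add]; ring_nf
  rw [h2]
  exact mul_le_mul h1 h1 (by linarith) (Real.exp_pos y).le

lemma GL_lb (L : ℝ) (hL : 4 ≤ L) : Real.exp (2*(L-1))/4 ≤ Gf L L := by
  have hL1 : (0:ℝ) ≤ L - 1 := by linarith
  have h1 : (∫ s in (0:ℝ)..(L-1), (Real.exp (2*s) - 1)) ≤ ∫ s in (0:ℝ)..(L-1), wf L s := by
    apply intervalIntegral.integral_mono_on hL1
    · exact ((by fun_prop : Continuous fun s => Real.exp (2*s) - 1).intervalIntegrable _ _)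
    · exact (wf_cont L).intervalIntegrable _ _
    · intro x hx
      exact wf_ge L hL hx.1 hx.2
  have h2 : (∫ s in (0:ℝ)..(L-1), wf L s) ≤ Gf L L := by
    apply intervalIntegral.integral_mono_interval le_rfl hL1 (by linarith)
    · refine (MeasureTheory.ae_restrict_iff' measurableSet_Ioc).mpr (Filter.Eventually.of_forall ?_)
      intro x hx
      simp only [Pi.zero_apply]
      exact wf_nonneg L hx.1.le (by linarith)
    · exact (wf_cont L).intervalIntegrable _ _
  have h3 : (∫ s in (0:ℝ)..(L-1), (Real.exp (2*s) - 1)) =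
      (Real.exp (2*(L-1))/2 - 1/2) - (L-1) := by
    rw [intervalIntegral.integral_sub
      ((by fun_prop : Continuous fun s => Real.exp (2*s)).intervalIntegrable _ _)
      (intervalIntegrable_const)]
    rw [integral_exp2]
    simp
  have h4 : L * L ≤ Real.exp (2*(L-1)) := by
    have := exp_sq_lb (L-1) (by linarith)
    calc L * L = (1+(L-1))*(1+(L-1)) := by ring
      _ ≤ _ := this
  nlinarith

lemma GL_ub (L : ℝ) (hL : 4 ≤ L) : Gf L L ≤ 2 * Real.exp (2*L) := by
  have h1 : Gf L L ≤ ∫ s in (0:ℝ)..L, 4 * Real.exp (2*s) := by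
    apply intervalIntegral.integral_mono_on (by linarith)
    · exact (wf_cont L).intervalIntegrable _ _
    · exact ((by fun_prop : Continuous fun s => 4 * Real.exp (2*s)).intervalIntegrable _ _)
    · intro x hx
      exact wf_le L hx.1 (by linarith)
  have h2 : (∫ s in (0:ℝ)..L, 4 * Real.exp (2*s)) = 2*Real.exp (2*L) - 2 := by
    rw [intervalIntegral.integral_const_mul, integral_exp2]
    simp
    ring
  have := Real.exp_pos (2*L)
  linarith

lemma Gf_ge (L : ℝ) {t : ℝ} (hL : 4 ≤ L) (h2 : 2 ≤ t) (htL : t ≤ L - 1) :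
    Real.exp (2*t)/4 ≤ Gf L t := by
  have ht0 : (0:ℝ) ≤ t := by linarith
  have h1 : (∫ s in (0:ℝ)..t, (Real.exp (2*s) - 1)) ≤ Gf L t := by
    apply intervalIntegral.integral_mono_on ht0
    · exact ((by fun_prop : Continuous fun s => Real.exp (2*s) - 1).intervalIntegrable _ _)
    · exact (wf_cont L).intervalIntegrable _ _
    · intro x hx
      exact wf_ge L hL hx.1 (hx.2.trans htL)
  have h3 : (∫ s in (0:ℝ)..t, (Real.exp (2*s) - 1)) = (Real.exp (2*t)/2 - 1/2) - t := by
    rw [intervalIntegral.integral_sub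
      ((by fun_prop : Continuous fun s => Real.exp (2*s)).intervalIntegrable _ _)
      (intervalIntegrable_const)]
    rw [integral_exp2]
    simp
  have h4 : 49 * (2*t - 3) ≤ Real.exp (2*t) := by
    have ha : Real.exp (2*t) = Real.exp 4 * Real.exp (2*t - 4) := by
      rw [← Real.exp_add]; ring_nf
    have hb : (49:ℝ) ≤ Real.exp 4 := by
      have h7 := exp_two_ge_seven
      have : Real.exp 4 = Real.exp 2 * Real.exp 2 := by rw [← Real.exp_add]; norm_num
      nlinarith [Real.exp_pos 2]
    have hc : 2*t - 3 ≤ Real.exp (2*t-4) := by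
      have := Real.add_one_le_exp (2*t-4)
      linarith
    rw [ha]
    nlinarith [Real.exp_pos (2*t-4)]
  nlinarith

lemma GL_pos (L : ℝ) (hL : 4 ≤ L) : 0 < Gf L L :=
  lt_of_lt_of_le (by positivity) (GL_lb L hL)

lemma ff_hasDeriv (L t : ℝ) : HasDerivAt (ff L) (-(wf L t / Gf L L)) t :=
  ((Gf_hasDeriv L t).div_const _).const_sub 1

lemma ff_deriv (L : ℝ) : deriv (ff L) = fun t => -(wf L t / Gf L L) :=
  funext fun t => (ff_hasDeriv L t).deriv

lemma ff_deriv2 (L t : ℝ) : iteratedDeriv 2 (ff L) t = -(vf L t / Gf L L) := by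
  rw [show (2:ℕ) = 1 + 1 from rfl, iteratedDeriv_succ, iteratedDeriv_one, ff_deriv]
  exact (((wf_hasDeriv L t).div_const _).neg).deriv

lemma ff_contDiff (L : ℝ) : ContDiff ℝ 2 (ff L) := by
  rw [show ((2:WithTop ℕ∞)) = 1 + 1 from by norm_num, contDiff_succ_iff_deriv]
  refine ⟨fun t => (ff_hasDeriv L t).differentiableAt, by simp, ?_⟩
  rw [ff_deriv, contDiff_one_iff_deriv]
  constructor
  · exact fun t => (((wf_hasDeriv L t).div_const _).neg).differentiableAt
  · have : deriv (fun t => -(wf L t / Gf L L)) = fun t => -(vf L t / Gf L L) :=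
      funext fun t => (((wf_hasDeriv L t).div_const _).neg).deriv
    rw [this]
    exact ((vf_cont L).div_const _).neg

lemma ff_zero (L : ℝ) : ff L 0 = 1 := by simp [ff, Gf_zero]

lemma ff_deriv_zero (L : ℝ) : deriv (ff L) 0 = 0 := by
  rw [ff_deriv]
  simp [wf_zero]

lemma ff_mem (L : ℝ) {t : ℝ} (hL : 4 ≤ L) (ht : 0 ≤ t) : ff L t ∈ Set.Icc (0:ℝ) 1 := by
  have hGL := GL_pos L hL
  constructor
  · have : Gf L t / Gf L L ≤ 1 := (div_le_one hGL).mpr (Gf_le_GL L hL ht)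
    simp [ff]; linarith
  · have : 0 ≤ Gf L t / Gf L L := div_nonneg (Gf_nonneg L hL ht) hGL.le
    simp [ff]; linarith

lemma ff_eq_zero (L : ℝ) {t : ℝ} (hL : 4 ≤ L) (ht : L ≤ |t|) : ff L t = 0 := by
  have hGL := GL_pos L hL
  have key : ∀ s, L ≤ s → ff L s = 0 := by
    intro s hs
    unfold ff
    rw [Gf_eq_GL_of_ge L hL hs, div_self hGL.ne']
    ring
  rcases abs_cases t with ⟨h, _⟩ | ⟨h, _⟩
  · exact key t (by linarith)
  · have : ff L t = ff L (-t) := by unfold ff; rw [Gf_even]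
    rw [this]
    exact key (-t) (by linarith)

lemma ff_compact_support (L : ℝ) (hL : 4 ≤ L) : HasCompactSupport (ff L) := by
  apply HasCompactSupport.intro (isCompact_Icc (a := -L) (b := L))
  intro x hx
  simp only [Set.mem_Icc, not_and_or, not_le] at hx
  apply ff_eq_zero L hL
  rcases hx with h | h
  · rw [abs_of_neg (by linarith)]; linarith
  · rw [abs_of_pos (by linarith)]; linarith

lemma pointwise_bound {C₀ Gb P Q v w f G : ℝ} (hC₀ : 0 < C₀) (hGb : 0 < Gb)
    (hPQ : P * Q = 1) (hP : 0 < P)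
    (hv : v^2 ≤ 576*Q^2) (hw : w^2 ≤ 16*Q^2)
    (hf : f = 1 - G/Gb) (hf0 : 0 ≤ f) (hf1 : f ≤ 1) :
    P * (C₀*(v/Gb)^2 + 2*(w/Gb)^2 + f^2) ≤
      (576*C₀+32)*Q/Gb^2 + P - P*G/Gb := by
  have hQ : 0 < Q := by nlinarith
  have hPQ2 : P * Q^2 = Q := by rw [pow_two, ← mul_assoc, hPQ, one_mul]
  have h1 : P * (v/Gb)^2 ≤ 576*Q/Gb^2 := by
    have ha : P * v^2 ≤ 576 * Q := by
      have hb := mul_le_mul_of_nonneg_left hv hP.le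
      nlinarith [hPQ2]
    calc P * (v/Gb)^2 = (P * v^2)/Gb^2 := by rw [div_pow]; ring
      _ ≤ (576*Q)/Gb^2 := by gcongr
  have h2 : P * (w/Gb)^2 ≤ 16*Q/Gb^2 := by
    have ha : P * w^2 ≤ 16 * Q := by
      have hb := mul_le_mul_of_nonneg_left hw hP.le
      nlinarith [hPQ2]
    calc P * (w/Gb)^2 = (P * w^2)/Gb^2 := by rw [div_pow]; ring
      _ ≤ (16*Q)/Gb^2 := by gcongr
  have h3 : P*f^2 ≤ P - P*G/Gb := by
    have hsq : f^2 ≤ f := by nlinarith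
    have hb : P*f^2 ≤ P*f := by nlinarith
    have hfeq : P*f = P - P*G/Gb := by rw [hf]; ring
    linarith
  calc P * (C₀*(v/Gb)^2 + 2*(w/Gb)^2 + f^2)
      = C₀*(P*(v/Gb)^2) + 2*(P*(w/Gb)^2) + P*f^2 := by ring
    _ ≤ C₀*(576*Q/Gb^2) + 2*(16*Q/Gb^2) + (P - P*G/Gb) := by
        have := mul_le_mul_of_nonneg_left h1 hC₀.le
        have := mul_le_mul_of_nonneg_left h2 (by norm_num : (0:ℝ) ≤ 2)
        linarith
    _ = (576*C₀+32)*Q/Gb^2 + P - P*G/Gb := by ring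

set_option maxHeartbeats 1000000 in
lemma main_bound (C₀ L : ℝ) (hC₀ : 0 < C₀)
    (hLdef : L = 4 + 64 * Real.exp 4 * (576*C₀+32)) :
    (∫ t in Set.Ioi (0:ℝ), Real.exp (-2*t) *
      (C₀ * (iteratedDeriv 2 (ff L) t)^2 + 2*(deriv (ff L) t)^2 + (ff L t)^2)) ≤
      1/2 - 1/(8*Real.exp (2*L)) := by
  have hexp4 : Real.exp 2 * Real.exp 2 = Real.exp 4 := by rw [← Real.exp_add]; norm_num
  have hKpos : (0:ℝ) < 576*C₀+32 := by linarith
  have hL : 4 ≤ L := by nlinarith [mul_pos (Real.exp_pos 4) hKpos]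
  set K : ℝ := 576*C₀+32 with hKdef
  set Gb : ℝ := Gf L L with hGbdef
  have hGb : 0 < Gb := GL_pos L hL
  set E : ℝ := Real.exp (2*L) with hEdef
  have hEpos : 0 < E := Real.exp_pos _
  have hE2 : (2:ℝ) ≤ E := E_ge_two hL
  set gfun : ℝ → ℝ := fun t => Real.exp (-2*t) *
    (C₀ * (vf L t / Gb)^2 + 2*(wf L t / Gb)^2 + (ff L t)^2) with hgdef
  have hffc : Continuous (ff L) := (ff_contDiff L).continuous
  have hgcont : Continuous gfun := by
    apply Continuous.mul
    · fun_prop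
    · exact ((continuous_const.mul (((vf_cont L).div_const Gb).pow 2)).add
        (continuous_const.mul (((wf_cont L).div_const Gb).pow 2))).add (hffc.pow 2)
  have hinteq : (∫ t in Set.Ioi (0:ℝ), Real.exp (-2*t) *
      (C₀ * (iteratedDeriv 2 (ff L) t)^2 + 2*(deriv (ff L) t)^2 + (ff L t)^2))
      = ∫ t in Set.Ioi (0:ℝ), gfun t := by
    congr 1
    funext t
    rw [ff_deriv2, ff_deriv]
    simp only [hgdef]
    ring
  rw [hinteq]
  have gzeroEq : Set.EqOn gfun 0 (Set.Ioi L) := by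
    intro x hx
    have hxL : L ≤ x := (Set.mem_Ioi.mp hx).le
    have hx' : L ≤ |x| := hxL.trans (le_abs_self x)
    simp only [hgdef, Pi.zero_apply]
    rw [vf_eq_zero L hx', wf_eq_zero L (by linarith) hxL, ff_eq_zero L hL hx']
    ring
  have h0L : (0:ℝ) < L := by linarith
  have hsplit : (∫ t in Set.Ioi (0:ℝ), gfun t) = ∫ t in (0:ℝ)..L, gfun t := by
    have hIoiL : MeasureTheory.IntegrableOn gfun (Set.Ioi L) := by
      exact (MeasureTheory.integrableOn_congr_fun gzeroEq measurableSet_Ioi).mpr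
        (MeasureTheory.integrableOn_zero)
    calc (∫ t in Set.Ioi (0:ℝ), gfun t)
        = (∫ t in Set.Ioc (0:ℝ) L, gfun t) + ∫ t in Set.Ioi L, gfun t := by
          rw [← MeasureTheory.setIntegral_union (Set.Ioc_disjoint_Ioi le_rfl) measurableSet_Ioi
            (hgcont.integrableOn_Ioc) hIoiL, Set.Ioc_union_Ioi_eq_Ioi h0L.le]
      _ = (∫ t in Set.Ioc (0:ℝ) L, gfun t) + 0 := by
          rw [MeasureTheory.setIntegral_congr_fun measurableSet_Ioi gzeroEq]
          simp
      _ = ∫ t in (0:ℝ)..L, gfun t := by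
          rw [intervalIntegral.integral_of_le h0L.le, add_zero]
  rw [hsplit]
  set hfun : ℝ → ℝ := fun t => (K/Gb^2) * Real.exp (2*t) + Real.exp (-2*t)
      - (1/Gb) * (Real.exp (-2*t) * Gf L t) with hhdef
  have hhcont : Continuous hfun := by
    apply Continuous.sub
    · fun_prop
    · exact continuous_const.mul ((by fun_prop : Continuous fun t => Real.exp (-2*t)).mul (Gf_cont L))
  have hmono : (∫ t in (0:ℝ)..L, gfun t) ≤ ∫ t in (0:ℝ)..L, hfun t := by
    apply intervalIntegral.integral_mono_on h0L.le
      (hgcont.intervalIntegrable _ _) (hhcont.intervalIntegrable _ _)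
    intro t ht
    have ht0 : 0 ≤ t := ht.1
    have htL : t ≤ L := ht.2
    have hL0 : (0:ℝ) ≤ L := by linarith
    have hPQ : Real.exp (-2*t) * Real.exp (2*t) = 1 := by
      rw [← Real.exp_add]; norm_num
    have hv : (vf L t)^2 ≤ 576 * (Real.exp (2*t))^2 := by
      have h := vf_abs_le L ht0 hL0
      nlinarith [sq_abs (vf L t), abs_nonneg (vf L t), Real.exp_pos (2*t),
        mul_self_le_mul_self (abs_nonneg (vf L t)) h]
    have hw : (wf L t)^2 ≤ 16 * (Real.exp (2*t))^2 := by
      have h1 := wf_nonneg L ht0 hL0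
      have h2 := wf_le L ht0 hL0
      nlinarith [Real.exp_pos (2*t)]
    have hmem := ff_mem L hL ht0
    have key := pointwise_bound (v := vf L t) (w := wf L t) (G := Gf L t)
      hC₀ hGb hPQ (Real.exp_pos _) hv hw rfl hmem.1 hmem.2
    calc gfun t ≤ (576*C₀+32) * Real.exp (2*t)/Gb^2 + Real.exp (-2*t)
          - Real.exp (-2*t) * Gf L t/Gb := key
      _ = hfun t := by simp only [hhdef, hKdef]; ring
  have hIG : (L-3)*(1/4:ℝ) ≤ ∫ t in (0:ℝ)..L, Real.exp (-2*t) * Gf L t := by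
    have hcont2 : Continuous fun t => Real.exp (-2*t) * Gf L t :=
      (by fun_prop : Continuous fun t => Real.exp (-2*t)).mul (Gf_cont L)
    have hmono2 : (∫ t in (2:ℝ)..(L-1), Real.exp (-2*t) * Gf L t)
        ≤ ∫ t in (0:ℝ)..L, Real.exp (-2*t) * Gf L t := by
      apply intervalIntegral.integral_mono_interval (by norm_num) (by linarith) (by linarith)
      · refine (MeasureTheory.ae_restrict_iff' measurableSet_Ioc).mpr
          (Filter.Eventually.of_forall ?_)
        intro x hx
        simp only [Pi.zero_apply]
        exact mul_nonneg (Real.exp_pos _).le (Gf_nonneg L hL hx.1.le)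
      · exact hcont2.intervalIntegrable _ _
    have hlow : ((L-1) - 2) * (1/4 : ℝ) ≤ ∫ t in (2:ℝ)..(L-1), Real.exp (-2*t) * Gf L t := by
      have hptw : ∀ x ∈ Set.Icc (2:ℝ) (L-1), (1/4:ℝ) ≤ Real.exp (-2*x) * Gf L x := by
        intro x hx
        have h1 := Gf_ge L hL hx.1 hx.2
        have hPQ : Real.exp (-2*x) * Real.exp (2*x) = 1 := by
          rw [← Real.exp_add]; norm_num
        nlinarith [Real.exp_pos (-2*x), Real.exp_pos (2*x)]
      have := intervalIntegral.integral_mono_on (show (2:ℝ) ≤ L-1 by linarith)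
        (intervalIntegrable_const (μ := MeasureTheory.volume) (c := (1/4:ℝ)))
        (hcont2.intervalIntegrable _ _) hptw
      rw [intervalIntegral.integral_const] at this
      simpa using this
    have : (L-3)*(1/4:ℝ) = ((L-1)-2)*(1/4:ℝ) := by ring
    linarith
  have hHval : (∫ t in (0:ℝ)..L, hfun t) = (K/Gb^2) * (E/2 - 1/2)
      + (1/2 - Real.exp (-2*L)/2)
      - (1/Gb) * ∫ t in (0:ℝ)..L, Real.exp (-2*t) * Gf L t := by
    have i1 : IntervalIntegrable (fun t => (K/Gb^2) * Real.exp (2*t)) MeasureTheory.volume 0 L :=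
      ((by fun_prop : Continuous fun t => (K/Gb^2) * Real.exp (2*t)).intervalIntegrable _ _)
    have i2 : IntervalIntegrable (fun t => Real.exp (-2*t)) MeasureTheory.volume 0 L :=
      ((by fun_prop : Continuous fun t => Real.exp (-2*t)).intervalIntegrable _ _)
    have i3 : IntervalIntegrable (fun t => (1/Gb) * (Real.exp (-2*t) * Gf L t))
        MeasureTheory.volume 0 L := by
      apply Continuous.intervalIntegrable
      exact continuous_const.mul ((by fun_prop : Continuous fun t => Real.exp (-2*t)).mul (Gf_cont L))
    calc (∫ t in (0:ℝ)..L, hfun t)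
        = (∫ t in (0:ℝ)..L, (K/Gb^2) * Real.exp (2*t)) + (∫ t in (0:ℝ)..L, Real.exp (-2*t))
          - ∫ t in (0:ℝ)..L, (1/Gb) * (Real.exp (-2*t) * Gf L t) := by
          rw [← intervalIntegral.integral_add i1 i2, ← intervalIntegral.integral_sub (i1.add i2) i3]
      _ = (K/Gb^2) * (E/2 - 1/2) + (1/2 - Real.exp (-2*L)/2)
          - (1/Gb) * ∫ t in (0:ℝ)..L, Real.exp (-2*t) * Gf L t := by
          rw [intervalIntegral.integral_const_mul, intervalIntegral.integral_const_mul,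
            integral_exp2, integral_expm2]
          norm_num [hEdef]
  -- numeric conclusion
  have hGbub : Gb ≤ 2*E := GL_ub L hL
  have hD : Real.exp (2*(L-1)) * Real.exp 2 = E := by
    rw [hEdef, ← Real.exp_add]; ring_nf
  set D : ℝ := Real.exp (2*(L-1)) with hDdef
  have hDpos : 0 < D := Real.exp_pos _
  have hGblb : D/4 ≤ Gb := GL_lb L hL
  have hIGlow := le_trans hIG (le_refl _)
  have hq1 : K*E/(2*Gb^2) ≤ 8*K*Real.exp 4/E := by
    rw [div_le_div_iff₀ (by positivity) hEpos]
    have hD2 : D^2 * Real.exp 4 = E^2 := by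
      calc D^2 * Real.exp 4 = (D*Real.exp 2)^2 := by rw [← hexp4]; ring
        _ = E^2 := by rw [hD]
    have hG2 : D^2/16 ≤ Gb^2 := by nlinarith [hGblb, hDpos, hGb]
    nlinarith [mul_le_mul_of_nonneg_left hG2
      (le_of_lt (mul_pos hKpos (Real.exp_pos 4))), hD2, hKpos.le]
  have hq2 : (L-3)/(8*E) ≤ (1/Gb) * ((L-3)*(1/4:ℝ)) := by
    have hL3 : (0:ℝ) < L - 3 := by linarith
    rw [show (1/Gb) * ((L-3)*(1/4:ℝ)) = (L-3)/(4*Gb) by ring]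
    apply div_le_div_of_nonneg_left hL3.le (by positivity)
    linarith
  have hq3 : (1/Gb) * ((L-3)*(1/4:ℝ)) ≤ (1/Gb) * ∫ t in (0:ℝ)..L, Real.exp (-2*t) * Gf L t := by
    apply mul_le_mul_of_nonneg_left hIG (by positivity)
  have he1 : (K/Gb^2)*(E/2 - 1/2) ≤ K*E/(2*Gb^2) := by
    rw [div_mul_eq_mul_div, div_le_div_iff₀ (by positivity) (by positivity)]
    nlinarith [hKpos, hGb, sq_nonneg Gb, mul_pos hKpos (mul_pos hGb hGb)]
  have he2 : (0:ℝ) ≤ Real.exp (-2*L)/2 := by positivity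
  have he3 : 8*K*Real.exp 4/E - (L-3)/(8*E) = -(1/(8*E)) := by
    have hL3 : L - 3 = 1 + 64*Real.exp 4*K := by rw [hLdef, hKdef]; ring
    rw [hL3]
    field_simp
    ring
  calc (∫ t in (0:ℝ)..L, gfun t) ≤ ∫ t in (0:ℝ)..L, hfun t := hmono
    _ = (K/Gb^2) * (E/2 - 1/2) + (1/2 - Real.exp (-2*L)/2)
        - (1/Gb) * ∫ t in (0:ℝ)..L, Real.exp (-2*t) * Gf L t := hHval
    _ ≤ K*E/(2*Gb^2) + 1/2 - (L-3)/(8*E) := by linarith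
    _ ≤ 8*K*Real.exp 4/E + 1/2 - (L-3)/(8*E) := by linarith
    _ = 1/2 - 1/(8*E) := by linarith
  

lemma wf_eq_zero' (L : ℝ) {x : ℝ} (hL : 4 ≤ L) (hx : L ≤ |x|) : wf L x = 0 := by
  rcases abs_cases x with ⟨h, _⟩ | ⟨h, _⟩
  · exact wf_eq_zero L (by linarith) (by linarith)
  · have : wf L x = - wf L (-x) := by rw [wf_neg]; ring
    rw [this, wf_eq_zero L (by linarith) (by linarith)]
    ring

end S18

set_option maxHeartbeats 1000000 in
/-- removal of higher modes: a compactly supported competitor profile,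
Lemma `lem_highermodes_deletion_positive`. -/
theorem statement18 (C₀ : ℝ) (hC₀ : 0 < C₀) :
    ∃ (η : ℝ) (f : ℝ → ℝ), 0 < η ∧ ContDiff ℝ 2 f ∧ HasCompactSupport f ∧
      (∀ t : ℝ, 0 ≤ t → f t ∈ Set.Icc (0:ℝ) 1) ∧ f 0 = 1 ∧ deriv f 0 = 0 ∧
      ∀ lam : ℝ, 1 ≤ lam →
        (∫ t in Set.Ioi (0:ℝ),
            Real.exp (-2 * t) *
              (C₀ * (iteratedDeriv 2 f t) ^ 2 + 2 * (deriv f t) ^ 2 + lam * (f t) ^ 2)) ≤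
          (1 - η) * (lam / 2) := by
  have hKpos : (0:ℝ) < 576*C₀+32 := by linarith
  set L : ℝ := 4 + 64 * Real.exp 4 * (576*C₀+32) with hLdef
  have hL : 4 ≤ L := by
    rw [hLdef]; nlinarith [mul_pos (Real.exp_pos 4) hKpos]
  set E : ℝ := Real.exp (2*L) with hEdef
  have hEpos : 0 < E := Real.exp_pos _
  set J : ℝ := ∫ t in Set.Ioi (0:ℝ), Real.exp (-2*t) *
      (C₀ * (iteratedDeriv 2 (S18.ff L) t)^2 + 2*(deriv (S18.ff L) t)^2 + (S18.ff L t)^2)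
    with hJdef
  have hJ : J ≤ 1/2 - 1/(8*E) := S18.main_bound C₀ L hC₀ hLdef
  have hffc : Continuous (S18.ff L) := (S18.ff_contDiff L).continuous
  have hdc : Continuous (deriv (S18.ff L)) := by
    rw [S18.ff_deriv]; exact ((S18.wf_cont L).div_const _).neg
  have hd2eq : (fun t => iteratedDeriv 2 (S18.ff L) t) =
      fun t => -(S18.vf L t / S18.Gf L L) := funext (S18.ff_deriv2 L)
  have hd2c : Continuous (fun t => iteratedDeriv 2 (S18.ff L) t) := by
    rw [hd2eq]; exact ((S18.vf_cont L).div_const _).neg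
  have key : ∀ c : ℝ, MeasureTheory.Integrable
      (fun t => Real.exp (-2*t) * (C₀ * (iteratedDeriv 2 (S18.ff L) t)^2
        + 2*(deriv (S18.ff L) t)^2 + c*(S18.ff L t)^2))
      (MeasureTheory.volume.restrict (Set.Ioi (0:ℝ))) := by
    intro c
    have hcont : Continuous (fun t => Real.exp (-2*t) * (C₀ * (iteratedDeriv 2 (S18.ff L) t)^2
        + 2*(deriv (S18.ff L) t)^2 + c*(S18.ff L t)^2)) := by
      apply Continuous.mul (by fun_prop)
      exact ((continuous_const.mul (hd2c.pow 2)).add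
        (continuous_const.mul (hdc.pow 2))).add (continuous_const.mul (hffc.pow 2))
    have hsupp : HasCompactSupport (fun t => (C₀ * (iteratedDeriv 2 (S18.ff L) t)^2
        + 2*(deriv (S18.ff L) t)^2 + c*(S18.ff L t)^2)) := by
      apply HasCompactSupport.intro (isCompact_Icc (a := -L) (b := L))
      intro x hx
      have hx' : L ≤ |x| := by
        simp only [Set.mem_Icc, not_and_or, not_le] at hx
        rcases hx with h | h
        · rw [abs_of_neg (by linarith)]; linarith
        · rw [abs_of_pos (by linarith)]; linarith
      rw [S18.ff_deriv2, S18.ff_deriv]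
      simp only [S18.vf_eq_zero L hx', S18.wf_eq_zero' L hL hx', S18.ff_eq_zero L hL hx']
      ring
    have hsupp2 : HasCompactSupport (fun t => Real.exp (-2*t) *
        (C₀ * (iteratedDeriv 2 (S18.ff L) t)^2
          + 2*(deriv (S18.ff L) t)^2 + c*(S18.ff L t)^2)) := by
      exact hsupp.mul_left
    exact (hcont.integrable_of_hasCompactSupport hsupp2).restrict
  refine ⟨1 - 2*J, S18.ff L, ?_, S18.ff_contDiff L, S18.ff_compact_support L hL,
    (fun t ht => S18.ff_mem L hL ht), S18.ff_zero L, S18.ff_deriv_zero L, ?_⟩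
  · have : (0:ℝ) < 1/(8*E) := by positivity
    linarith
  · intro lam hlam
    have hptw : ∀ t : ℝ, Real.exp (-2*t) * (C₀ * (iteratedDeriv 2 (S18.ff L) t)^2
        + 2*(deriv (S18.ff L) t)^2 + lam*(S18.ff L t)^2)
        ≤ lam * (Real.exp (-2*t) * (C₀ * (iteratedDeriv 2 (S18.ff L) t)^2
        + 2*(deriv (S18.ff L) t)^2 + 1*(S18.ff L t)^2)) := by
      intro t
      have hAB : 0 ≤ C₀ * (iteratedDeriv 2 (S18.ff L) t)^2 + 2*(deriv (S18.ff L) t)^2 :=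
        add_nonneg (mul_nonneg hC₀.le (sq_nonneg _)) (by positivity)
      have hprod := mul_nonneg (mul_nonneg (by linarith : (0:ℝ) ≤ lam - 1)
        (Real.exp_pos (-2*t)).le) hAB
      nlinarith [hprod]
    have hint1 : MeasureTheory.Integrable
        (fun t => lam * (Real.exp (-2*t) * (C₀ * (iteratedDeriv 2 (S18.ff L) t)^2
        + 2*(deriv (S18.ff L) t)^2 + 1*(S18.ff L t)^2)))
        (MeasureTheory.volume.restrict (Set.Ioi (0:ℝ))) := (key 1).const_mul lam
    have hmono := MeasureTheory.integral_mono (key lam) hint1 hptw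
    have heq1 : (∫ t in Set.Ioi (0:ℝ), lam * (Real.exp (-2*t) *
        (C₀ * (iteratedDeriv 2 (S18.ff L) t)^2
        + 2*(deriv (S18.ff L) t)^2 + 1*(S18.ff L t)^2))) = lam * J := by
      rw [MeasureTheory.integral_const_mul, hJdef]
      congr 1
      congr 1
      funext t
      ring
    have hfinal : (∫ t in Set.Ioi (0:ℝ), Real.exp (-2*t) *
        (C₀ * (iteratedDeriv 2 (S18.ff L) t)^2
        + 2*(deriv (S18.ff L) t)^2 + lam*(S18.ff L t)^2)) ≤ lam * J := by
      rw [← heq1]; exact hmono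
    have hring : (1 - (1 - 2*J)) * (lam/2) = lam * J := by ring
    rw [hring]
    calc (∫ t in Set.Ioi (0:ℝ), Real.exp (-2 * t) *
          (C₀ * (iteratedDeriv 2 (S18.ff L) t) ^ 2 + 2 * (deriv (S18.ff L) t) ^ 2
            + lam * (S18.ff L t) ^ 2))
        = ∫ t in Set.Ioi (0:ℝ), Real.exp (-2*t) *
          (C₀ * (iteratedDeriv 2 (S18.ff L) t)^2
            + 2*(deriv (S18.ff L) t)^2 + lam*(S18.ff L t)^2) := by norm_num
      _ ≤ lam * J := hfinal
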